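/- Let (X, μ) be a measure space, ε > 0, let λ₊, λ₋ ∈ L¹(μ) be nonnegative, let u, u′, v be measurable real-valued functions with λ₊·(u − u′) and λ₋·(u − u′) integrable, and let χ₊, χ₋ be measurable functions such that almost everywhere 0 ≤ χ₊ ≤ 1, χ₊ = 1 on {u > v}, χ₊ = 0 on {u < v}, and 0 ≤ χ₋ ≤ 1, χ₋ = 1 on {u < v}, χ₋ = 0 on {u > v}. Then ∫_X [λ₊·(H_ε(u′ − v) − χ₊) − λ₋·(H_ε(v − u′) − χ₋)]·(u − u′) dμ ≤ ε·(‖λ₊‖_{L¹(μ)} + ‖λ₋‖_{L¹(μ)}). -/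

import Mathlib

/-!
Pointwise, `χ₊` is a selection of the Heaviside graph at `u - v`, and `H_ε` differs from the
Heaviside function only on `(0, ε)`; a case analysis on the signs of `u - v` and `u' - v` gives
`(H_ε(u' - v) - χ₊)(u - u') ≤ ε`, and symmetrically for `χ₋`. Multiplying by `λ± ≥ 0` and
integrating yields the bound.
-/

open MeasureTheory

/-- The regularized Heaviside function `H_ε`. -/
noncomputable def Heps (ε t : ℝ) : ℝ := max 0 (min (t / ε) 1)

lemma Heps_nonneg (ε t : ℝ) : 0 ≤ Heps ε t := le_max_left _ _

lemma Heps_le_one (ε t : ℝ) : Heps ε t ≤ 1 :=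
  max_le zero_le_one (min_le_right _ _)

lemma Heps_eq_zero_of_nonpos {ε t : ℝ} (hε : 0 < ε) (ht : t ≤ 0) : Heps ε t = 0 :=
  max_eq_left <| (min_le_left _ _).trans (div_nonpos_of_nonpos_of_nonneg ht hε.le)

lemma Heps_eq_one_of_le {ε t : ℝ} (hε : 0 < ε) (ht : ε ≤ t) : Heps ε t = 1 := by
  rw [Heps, min_eq_right ((one_le_div₀ hε).2 ht), max_eq_right zero_le_one]

lemma Heps_sub_mul_sub_le {ε a b χ : ℝ} (hε : 0 < ε) (hχ : χ ∈ Set.Icc (0 : ℝ) 1)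
    (hpos : 0 < a → χ = 1) (hneg : a < 0 → χ = 0) :
    (Heps ε b - χ) * (a - b) ≤ ε := by
  obtain ⟨hχ0, hχ1⟩ := hχ
  have hH0 := Heps_nonneg ε b
  have hH1 := Heps_le_one ε b
  rcases le_or_gt a b with hab | hba
  · rcases lt_or_ge a 0 with ha | ha
    · rw [hneg ha]
      nlinarith
    rcases le_or_gt ε b with hb | hb
    · rw [Heps_eq_one_of_le hε hb]
      nlinarith
    -- the only case with a positive product: `0 ≤ a ≤ b < ε`, where `b - a < ε`
    calc (Heps ε b - χ) * (a - b) = (χ - Heps ε b) * (b - a) := by ring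
      _ ≤ 1 * (b - a) := mul_le_mul_of_nonneg_right (by linarith) (by linarith)
      _ ≤ ε := by linarith
  · rcases lt_or_ge 0 a with ha | ha
    · rw [hpos ha]
      nlinarith
    · rw [Heps_eq_zero_of_nonpos hε (by linarith)]
      nlinarith

lemma integral_le_integral_of_ae_le_of_nonneg {α : Type*} [MeasurableSpace α] {μ : Measure α}
    {f g : α → ℝ} (hg : Integrable g μ) (hg0 : 0 ≤ᵐ[μ] g) (hfg : f ≤ᵐ[μ] g) :
    ∫ x, f x ∂μ ≤ ∫ x, g x ∂μ := by
  by_cases hf : Integrable f μ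
  · exact integral_mono_ae hf hg hfg
  · rw [integral_undef hf]
    exact integral_nonneg_of_ae hg0

theorem stmt4_general {X : Type*} [MeasurableSpace X] (μ : Measure X) (ε : ℝ) (hε : 0 < ε)
    (lp lm u u' v χp χm : X → ℝ)
    (hlp : Integrable lp μ) (hlm : Integrable lm μ)
    (hlp0 : ∀ᵐ x ∂μ, 0 ≤ lp x) (hlm0 : ∀ᵐ x ∂μ, 0 ≤ lm x)
    (hχp01 : ∀ᵐ x ∂μ, 0 ≤ χp x ∧ χp x ≤ 1)
    (hχpgt : ∀ᵐ x ∂μ, u x > v x → χp x = 1)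
    (hχplt : ∀ᵐ x ∂μ, u x < v x → χp x = 0)
    (hχm01 : ∀ᵐ x ∂μ, 0 ≤ χm x ∧ χm x ≤ 1)
    (hχmlt : ∀ᵐ x ∂μ, u x < v x → χm x = 1)
    (hχmgt : ∀ᵐ x ∂μ, u x > v x → χm x = 0) :
    ∫ x, (lp x * (Heps ε (u' x - v x) - χp x)
        - lm x * (Heps ε (v x - u' x) - χm x)) * (u x - u' x) ∂μ
      ≤ ε * ((∫ x, |lp x| ∂μ) + (∫ x, |lm x| ∂μ)) := by
  have hbound : ∀ᵐ x ∂μ, (lp x * (Heps ε (u' x - v x) - χp x)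
        - lm x * (Heps ε (v x - u' x) - χm x)) * (u x - u' x) ≤ ε * (|lp x| + |lm x|) := by
    filter_upwards [hlp0, hlm0, hχp01, hχpgt, hχplt, hχm01, hχmlt, hχmgt]
      with x hlp0 hlm0 hχp01 hχpgt hχplt hχm01 hχmlt hχmgt
    have hp : (Heps ε (u' x - v x) - χp x) * ((u x - v x) - (u' x - v x)) ≤ ε :=
      Heps_sub_mul_sub_le hε hχp01 (fun h => hχpgt (by linarith)) (fun h => hχplt (by linarith))
    have hm : (Heps ε (v x - u' x) - χm x) * ((v x - u x) - (v x - u' x)) ≤ ε :=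
      Heps_sub_mul_sub_le hε hχm01 (fun h => hχmlt (by linarith)) (fun h => hχmgt (by linarith))
    rw [abs_of_nonneg hlp0, abs_of_nonneg hlm0]
    nlinarith [mul_le_mul_of_nonneg_left hp hlp0, mul_le_mul_of_nonneg_left hm hlm0]
  have hrhs0 : 0 ≤ᵐ[μ] fun x => ε * (|lp x| + |lm x|) :=
    Filter.Eventually.of_forall fun x => by positivity
  calc _ ≤ ∫ x, ε * (|lp x| + |lm x|) ∂μ :=
        integral_le_integral_of_ae_le_of_nonneg ((hlp.abs.add hlm.abs).const_mul ε) hrhs0 hbound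
    _ = ε * ((∫ x, |lp x| ∂μ) + (∫ x, |lm x| ∂μ)) := by
        rw [integral_const_mul, integral_add hlp.abs hlm.abs]

theorem stmt4 {X : Type*} [MeasurableSpace X] (μ : Measure X) (ε : ℝ) (hε : 0 < ε)
    (lp lm u u' v χp χm : X → ℝ)
    (hlp : Integrable lp μ) (hlm : Integrable lm μ)
    (hlp0 : ∀ᵐ x ∂μ, 0 ≤ lp x) (hlm0 : ∀ᵐ x ∂μ, 0 ≤ lm x)
    (hu : Measurable u) (hu' : Measurable u') (hv : Measurable v)
    (hχp : Measurable χp) (hχm : Measurable χm)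
    (hint1 : Integrable (fun x => lp x * (u x - u' x)) μ)
    (hint2 : Integrable (fun x => lm x * (u x - u' x)) μ)
    (hχp01 : ∀ᵐ x ∂μ, 0 ≤ χp x ∧ χp x ≤ 1)
    (hχpgt : ∀ᵐ x ∂μ, u x > v x → χp x = 1)
    (hχplt : ∀ᵐ x ∂μ, u x < v x → χp x = 0)
    (hχm01 : ∀ᵐ x ∂μ, 0 ≤ χm x ∧ χm x ≤ 1)
    (hχmlt : ∀ᵐ x ∂μ, u x < v x → χm x = 1)
    (hχmgt : ∀ᵐ x ∂μ, u x > v x → χm x = 0) :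
    ∫ x, (lp x * (Heps ε (u' x - v x) - χp x)
        - lm x * (Heps ε (v x - u' x) - χm x)) * (u x - u' x) ∂μ
      ≤ ε * ((∫ x, |lp x| ∂μ) + (∫ x, |lm x| ∂μ)) :=
  stmt4_general μ ε hε lp lm u u' v χp χm hlp hlm hlp0 hlm0 hχp01 hχpgt hχplt hχm01 hχmlt hχmgt
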